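/- arXiv:1401.7179 — 3 statements merged into one kernel-verified Lean document; each statement's English description precedes it below -/
import Mathlib

section
/- If k > 1 is real and n ∈ ℕ satisfies R_n^(k) = p_n, then R_m^(k) = p_m for every m with 1 ≤ m ≤ n. -/
/-- Prime counting function extended to the reals: `primePi x = π(⌊x⌋)`. -/
noncomputable def primePi (x : ℝ) : ℕ := Nat.primeCounting ⌊x⌋₊

/-- The `n`-th `k`-Ramanujan prime: the smallest positive integer `m` such that
`π(x) - π(x/k) ≥ n` for all real `x ≥ m`. -/
noncomputable def Ram (k : ℝ) (n : ℕ) : ℕ :=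
  sInf {m : ℕ | 0 < m ∧ ∀ x : ℝ, (m : ℝ) ≤ x → primePi (x / k) + n ≤ primePi x}

/-- The `n`-th prime (`nthPrime 1 = 2`). -/
noncomputable def nthPrime (n : ℕ) : ℕ := Nat.nth Nat.Prime (n - 1)

lemma nth_prime_pos (j : ℕ) : 0 < Nat.nth Nat.Prime j :=
  (Nat.prime_nth_prime j).pos

lemma primePi_mono : Monotone primePi :=
  fun _ _ hxy => Nat.monotone_primeCounting (Nat.floor_mono hxy)

lemma primePi_natCast (N : ℕ) : primePi (N : ℝ) = Nat.primeCounting N := by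
  rw [primePi, Nat.floor_natCast]

lemma primePi_nth (j : ℕ) : primePi ((Nat.nth Nat.Prime j : ℕ) : ℝ) = j + 1 := by
  rw [primePi_natCast, Nat.primeCounting, Nat.primeCounting',
    Nat.count_nth_succ (fun hf => absurd hf Nat.infinite_setOf_prime)]

lemma primePi_nth_sub_one (j : ℕ) :
    primePi ((Nat.nth Nat.Prime j - 1 : ℕ) : ℝ) = j := by
  rw [primePi_natCast, Nat.primeCounting, Nat.primeCounting',
    Nat.sub_add_cancel (nth_prime_pos j),
    Nat.count_nth_of_infinite Nat.infinite_setOf_prime]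

theorem stmt4 (k : ℝ) (hk : 1 < k) (n : ℕ) (h : Ram k n = nthPrime n)
    (m : ℕ) (hm : 1 ≤ m) (hmn : m ≤ n) :
    Ram k m = nthPrime m := by
  have hk0 : (0 : ℝ) < k := lt_trans one_pos hk
  set S : ℕ → Set ℕ := fun j =>
    {m : ℕ | 0 < m ∧ ∀ x : ℝ, (m : ℝ) ≤ x → primePi (x / k) + j ≤ primePi x} with hS
  have hn1 : 1 ≤ n := le_trans hm hmn
  -- the set for n is nonempty, hence Ram k n is a member
  have hSn : Ram k n ∈ S n := by
    apply Nat.sInf_mem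
    by_contra hempty
    rw [Set.not_nonempty_iff_eq_empty] at hempty
    have h0 : Ram k n = 0 := by
      have : Ram k n = sInf (S n) := rfl
      rw [this, hempty, Nat.sInf_empty]
    rw [h] at h0
    have := nth_prime_pos (n - 1)
    rw [nthPrime] at h0
    omega
  -- key fact: primePi (p_n / k) = 0
  have hpn : primePi ((nthPrime n : ℝ)) = n := by
    have := primePi_nth (n - 1)
    rwa [Nat.sub_add_cancel hn1] at this
  have hkey : primePi ((nthPrime n : ℝ) / k) = 0 := by
    have := hSn.2 (nthPrime n) (by rw [h])
    rw [hpn] at this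
    omega
  -- p_m ∈ S m
  have hmem : nthPrime m ∈ S m := by
    refine ⟨(nth_prime_pos (m - 1)), fun x hx => ?_⟩
    rcases le_or_gt ((nthPrime n : ℝ)) x with hxn | hxn
    · have := hSn.2 x (by rw [h]; exact hxn)
      omega
    · have h1 : primePi (x / k) = 0 := by
        have hle : primePi (x / k) ≤ primePi ((nthPrime n : ℝ) / k) :=
          primePi_mono (by gcongr)
        omega
      rw [h1]
      have h2 : m ≤ primePi x := by
        have := primePi_mono hx
        rw [show (nthPrime m : ℝ) = ((Nat.nth Nat.Prime (m-1) : ℕ) : ℝ) from rfl,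
          primePi_nth] at this
        omega
      omega
  -- Ram k m is a member of S m and every member is ≥ p_m
  have hRm : Ram k m ∈ S m := Nat.sInf_mem ⟨_, hmem⟩
  have hub : Ram k m ≤ nthPrime m := Nat.sInf_le hmem
  have hlb : nthPrime m ≤ Ram k m := by
    by_contra hlt
    push_neg at hlt
    have hle : (Ram k m : ℝ) ≤ ((nthPrime m - 1 : ℕ) : ℝ) := by
      exact_mod_cast Nat.le_sub_one_of_lt hlt
    have := hRm.2 _ hle
    rw [show ((nthPrime m - 1 : ℕ) : ℝ) = ((Nat.nth Nat.Prime (m-1) - 1 : ℕ) : ℝ) from rfl,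
      primePi_nth_sub_one] at this
    omega
  omega
end

section
/- If k ≥ 2 is real, then R_{π(k)}^(k) = p_{π(k)}. -/
/-!
Let `c = ⌊k⌋` and `p = p_{π(c)} ≤ c`. Since `π(p - 1) = π(c) - 1`, no `m < p` qualifies, so
`R_{π(k)}^(k) ≥ p`. For `x ≥ p`, put `b = ⌊x/k⌋`: if `b ≤ 1` then `π(x/k) = 0` and
`π(x) ≥ π(p) = π(c)`; otherwise `bc ≤ x`, and Ishikawa's inequality `π(b) + π(c) ≤ π(bc)`
gives `π(x) - π(x/k) ≥ π(c)`.

For Ishikawa's inequality with `2 ≤ m ≤ n`, let `t = 2^(⌊log₂ m⌋ - 1) n`, so that `n ≤ t` and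
`mn/4 < t ≤ mn/2`. Erdős' central binomial argument from the proof of Bertrand's postulate,
run without assuming that `(t, 2t]` is free of primes, shows that this interval contains at least
`π(m)` primes as soon as `n ≥ 8192` or `m ≥ 512`. In the remaining range the inequality reduces
to `p_{i+1+j} ≤ p_i p_j` (primes indexed from `0`) for `i < 97` and `j < 1028`, which the kernel
checks on the list of primes below `9050`.
-/

open Finset
open scoped Nat.Prime

namespace Nat

theorem nth_prime_le_iff_lt_primeCounting {k x : ℕ} : nth Nat.Prime k ≤ x ↔ k < π x :=
  ((lt_nth_iff_count_lt infinite_setOfPred_prime).trans Nat.lt_succ_iff).symm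

theorem card_filter_prime_Ico {a b : ℕ} (hab : a ≤ b) :
    #{p ∈ Ico (a + 1) (b + 1) | p.Prime} = π b - π a := by
  have hsplit : π b = π a + #{p ∈ Ico (a + 1) (b + 1) | p.Prime} := by
    simp only [primeCounting, primeCounting', count_eq_card_filter_range, range_eq_Ico]
    rw [← Ico_union_Ico_eq_Ico (zero_le (a + 1)) (by omega), filter_union,
      card_union_of_disjoint (disjoint_filter_filter (Ico_disjoint_Ico_consecutive _ _ _))]
  omega

theorem nth_eq_getD_filter_range {p : ℕ → Prop} [DecidablePred p] {N r : ℕ}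
    (hr : r < ((List.range N).filter (p ·)).length) :
    nth p r = ((List.range N).filter (p ·)).getD r 0 := by
  induction N with
  | zero => simp at hr
  | succ N ih =>
    rw [List.range_succ, List.filter_append] at hr ⊢
    by_cases hr' : r < ((List.range N).filter (p ·)).length
    · rw [List.getD_append _ _ _ _ hr', ih hr']
    have hcount : count p N = ((List.range N).filter (p ·)).length := by
      rw [count, List.countP_eq_length_filter]
    by_cases hN : p N
    · obtain rfl : r = count p N := by
        simp only [hN, decide_true, List.filter_cons_of_pos, List.filter_nil, List.length_append,
          List.length_singleton] at hr
        omega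
      rw [nth_count hN, hcount, List.getD_append_right _ _ _ _ le_rfl]
      simp [hN]
    · simp [hN] at hr
      exact absurd hr hr'

theorem mul_add_one_lt_two_pow {a b k : ℕ} (hb : a * (b + 1) < 2 ^ b) (hk : b ≤ k) :
    a * (k + 1) < 2 ^ k := by
  induction k, hk using Nat.le_induction with
  | base => exact hb
  | succ k hk ih =>
    have : a ≤ 2 ^ k := (Nat.le_mul_of_pos_right a k.succ_pos).trans ih.le
    rw [pow_succ]
    linarith

theorem six_mul_log_add_one_le_sqrt {x : ℕ} (hx : 16384 ≤ x) : 6 * (log 2 x + 1) ≤ sqrt x := by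
  set k := log 2 x
  have hk : 14 ≤ k := le_log_of_pow_le one_lt_two (by norm_num; omega)
  have h2k : 2 ^ (k / 2) * 2 ^ (k / 2) ≤ x := by
    rw [← pow_add]
    exact (Nat.pow_le_pow_right two_pos (by omega)).trans (pow_log_le_self 2 (by omega))
  have := mul_add_one_lt_two_pow (a := 12) (b := 7) (by norm_num) (by omega : 7 ≤ k / 2)
  have := le_sqrt.2 h2k
  omega

theorem prod_pow_factorization_choose_eq_prod_filter_prime (n k : ℕ) (S : Finset ℕ) :
    ∏ p ∈ S with p.Prime, p ^ (n.choose k).factorization p =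
      ∏ p ∈ S, p ^ (n.choose k).factorization p :=
  prod_filter_of_ne fun p _ h ↦
    by_contra fun hp ↦ h (by rw [factorization_eq_zero_of_not_prime _ hp, pow_zero])

theorem prod_pow_factorization_choose_le_pow_card {n k : ℕ} (hn : 0 < n) (S : Finset ℕ) :
    ∏ p ∈ S, p ^ (n.choose k).factorization p ≤ n ^ #{p ∈ S | p.Prime} := by
  rw [← prod_pow_factorization_choose_eq_prod_filter_prime]
  exact prod_le_pow_card _ _ _ fun p _ ↦ pow_factorization_choose_le hn

theorem prod_pow_factorization_choose_le_prod_primes {n k : ℕ} {S : Finset ℕ}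
    (hS : ∀ p ∈ S, n < p ^ 2) :
    ∏ p ∈ S, p ^ (n.choose k).factorization p ≤ ∏ p ∈ S with p.Prime, p := by
  rw [← prod_pow_factorization_choose_eq_prod_filter_prime]
  refine prod_le_prod' fun p hp ↦ ?_
  rw [mem_filter] at hp
  exact (Nat.pow_le_pow_right hp.2.pos (factorization_choose_le_one (hS p hp.1))).trans_eq
    (pow_one p)

theorem centralBinom_le_mul_pow_primeCounting_sub {t : ℕ} (ht : 2 < t) :
    centralBinom t ≤
      (2 * t) ^ (sqrt (2 * t) + 1) * 4 ^ (2 * t / 3) * (2 * t) ^ (π (2 * t) - π t) := by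
  set s := sqrt (2 * t)
  set f : ℕ → ℕ := fun p ↦ p ^ (centralBinom t).factorization p
  have hs : s ≤ 2 * t / 3 := by
    have := sqrt_le' (2 * t)
    rcases le_or_gt s 2 with h | h
    · omega
    · exact (Nat.le_div_iff_mul_le (by norm_num)).2 (by nlinarith)
  have hsmall : ∏ p ∈ Ico 0 (s + 1), f p ≤ (2 * t) ^ (s + 1) :=
    (prod_pow_factorization_choose_le_pow_card (by omega) _).trans
      (Nat.pow_le_pow_right (by omega) ((card_filter_le _ _).trans (by simp)))
  have hmedium : ∏ p ∈ Ico (s + 1) (2 * t / 3 + 1), f p ≤ 4 ^ (2 * t / 3) := by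
    refine (prod_pow_factorization_choose_le_prod_primes fun p hp ↦ ?_).trans
      ((prod_le_prod_of_subset_of_one_le' (fun p hp ↦ ?_) fun p hp _ ↦ ?_).trans
        (primorial_le_four_pow _))
    · exact (lt_succ_sqrt' _).trans_le (Nat.pow_le_pow_left (mem_Ico.1 hp).1 2)
    · rw [mem_filter, mem_Ico] at hp
      exact mem_filter.2 ⟨mem_range.2 (by omega), hp.2⟩
    · exact (mem_filter.1 hp).2.one_le
  have hgap : ∏ p ∈ Ico (2 * t / 3 + 1) (t + 1), f p = 1 := by
    refine prod_eq_one fun p hp ↦ ?_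
    rw [mem_Ico] at hp
    by_cases hp' : p.Prime
    · simp [f, factorization_centralBinom_of_two_mul_self_lt_three_mul (p := p) ht (by omega)
        (by omega)]
    · simp [f, factorization_eq_zero_of_not_prime _ hp']
  have hlarge : ∏ p ∈ Ico (t + 1) (2 * t + 1), f p ≤ (2 * t) ^ (π (2 * t) - π t) := by
    rw [← card_filter_prime_Ico (by omega)]
    exact prod_pow_factorization_choose_le_pow_card (by omega) _
  calc centralBinom t = ∏ p ∈ Ico 0 (2 * t + 1), f p := by
        rw [← range_eq_Ico]
        exact (prod_pow_factorization_centralBinom t).symm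
    _ = (∏ p ∈ Ico 0 (s + 1), f p) * (∏ p ∈ Ico (s + 1) (2 * t / 3 + 1), f p) *
          (∏ p ∈ Ico (2 * t / 3 + 1) (t + 1), f p) * ∏ p ∈ Ico (t + 1) (2 * t + 1), f p := by
        rw [prod_Ico_consecutive _ (zero_le _) (by omega),
          prod_Ico_consecutive _ (zero_le _) (by omega),
          prod_Ico_consecutive _ (zero_le _) (by omega)]
    _ ≤ _ := by
        rw [hgap, mul_one]
        gcongr

theorem two_mul_lt_three_mul_log_mul_primeCounting_sub {t : ℕ} (ht : 4 ≤ t) :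
    2 * t < 3 * (log 2 (2 * t) + 1) * (π (2 * t) - π t + sqrt (2 * t) + 2) := by
  set e := π (2 * t) - π t + sqrt (2 * t) + 2
  set l := log 2 (2 * t) + 1
  have h2t : 2 * t < 2 ^ l := lt_pow_succ_log_self one_lt_two _
  have hpow : 2 ^ (2 * t) < 2 ^ (l * e + 2 * (2 * t / 3)) :=
    calc 2 ^ (2 * t) = 4 ^ t := by rw [pow_mul]; norm_num
      _ < t * centralBinom t := four_pow_lt_mul_centralBinom t ht
      _ ≤ 2 * t * ((2 * t) ^ (sqrt (2 * t) + 1) * 4 ^ (2 * t / 3) *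
            (2 * t) ^ (π (2 * t) - π t)) :=
        Nat.mul_le_mul (by omega) (centralBinom_le_mul_pow_primeCounting_sub (by omega))
      _ = (2 * t) ^ e * 4 ^ (2 * t / 3) := by ring
      _ ≤ (2 ^ l) ^ e * 4 ^ (2 * t / 3) := by gcongr
      _ = 2 ^ (l * e + 2 * (2 * t / 3)) := by
        rw [pow_add 2 (l * e), pow_mul, pow_mul]
        norm_num
  have := (Nat.pow_lt_pow_iff_right (by norm_num)).1 hpow
  have : 3 * (2 * (2 * t / 3)) ≤ 4 * t := by omega
  nlinarith

theorem primeCounting_add_le_primeCounting_two_mul {t N : ℕ} (ht : 8192 ≤ t)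
    (hN : 3 * (log 2 (2 * t) + 1) * (N + 1) < t) : π t + N ≤ π (2 * t) := by
  by_contra! h
  have hcount := two_mul_lt_three_mul_log_mul_primeCounting_sub (by omega : 4 ≤ t)
  have hsqrt := six_mul_log_add_one_le_sqrt (by omega : 16384 ≤ 2 * t)
  have hsq := sqrt_le' (2 * t)
  have hmono := monotone_primeCounting (by omega : t ≤ 2 * t)
  set l := log 2 (2 * t) + 1
  set s := sqrt (2 * t)
  have : 3 * l * (π (2 * t) - π t + s + 2) ≤ 3 * l * (N + 1) + 3 * l * s := by
    rw [← mul_add]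
    exact Nat.mul_le_mul_left _ (by omega)
  nlinarith

theorem three_mul_log_mul_lt {m n t : ℕ} (hm : 2 ≤ m) (hmn : m ≤ n) (hn : 512 ≤ n)
    (h2t : 2 * t ≤ m * n) (h4t : m * n < 4 * t) : 3 * (log 2 (2 * t) + 1) * (m + 2) < t := by
  set k := log 2 n
  have hk : 9 ≤ k := le_log_of_pow_le one_lt_two (by norm_num; omega)
  have hkn : 2 ^ k ≤ n := pow_log_le_self 2 (by omega)
  have hlog : log 2 (2 * t) < 2 * k + 2 := by
    refine log_lt_of_lt_pow (by nlinarith) ?_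
    calc 2 * t ≤ n * n := h2t.trans (Nat.mul_le_mul_right n hmn)
      _ < 2 ^ (k + 1) * 2 ^ (k + 1) := Nat.mul_self_lt_mul_self (lt_pow_succ_log_self one_lt_two n)
      _ = 2 ^ (2 * k + 2) := by rw [← pow_add]; ring_nf
  have h48 := mul_add_one_lt_two_pow (a := 48) (b := 9) (by norm_num) hk
  have : 12 * (log 2 (2 * t) + 1) * (m + 2) < 4 * t :=
    calc 12 * (log 2 (2 * t) + 1) * (m + 2) ≤ 12 * (2 * k + 2) * (2 * m) :=
          Nat.mul_le_mul (Nat.mul_le_mul_left 12 (by omega)) (by omega)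
      _ = 48 * (k + 1) * m := by ring
      _ < 2 ^ k * m := Nat.mul_lt_mul_of_pos_right h48 (by omega)
      _ ≤ m * n := by rw [mul_comm]; exact Nat.mul_le_mul_left m hkn
      _ < 4 * t := h4t
  linarith

theorem primeCounting_add_le_primeCounting_mul_of_large {m n : ℕ} (hm : 2 ≤ m) (hmn : m ≤ n)
    (h : 8192 ≤ n ∨ 512 ≤ m) : π m + π n ≤ π (m * n) := by
  obtain ⟨j, hj⟩ : ∃ j, log 2 m = j + 1 :=
    exists_eq_add_one.2 (le_log_of_pow_le one_lt_two (by omega))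
  set t := 2 ^ j * n
  have h2t : 2 * t ≤ m * n := by
    rw [← mul_assoc, show 2 * 2 ^ j = 2 ^ log 2 m by rw [hj]; ring]
    exact Nat.mul_le_mul_right n (pow_log_le_self 2 (by omega))
  have h4t : m * n < 4 * t := by
    rw [← mul_assoc, show 4 * 2 ^ j = 2 ^ (log 2 m + 1) by rw [hj]; ring]
    exact Nat.mul_lt_mul_of_pos_right (lt_pow_succ_log_self one_lt_two m) (by omega)
  have hnt : n ≤ t := Nat.le_mul_of_pos_left n (by positivity)
  have ht : 8192 ≤ t := by
    rcases h with h | h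
    · omega
    · nlinarith
  have hN : 3 * (log 2 (2 * t) + 1) * (π m + 1) < t := by
    have : π m ≤ m + 1 := count_le _
    exact (Nat.mul_le_mul_left _ (by omega)).trans_lt
      (three_mul_log_mul_lt hm hmn (by omega) h2t h4t)
  calc π m + π n ≤ π t + π m := by have := monotone_primeCounting hnt; omega
    _ ≤ π (2 * t) := primeCounting_add_le_primeCounting_two_mul ht hN
    _ ≤ π (m * n) := monotone_primeCounting h2t

end Nat

open Nat

def trialDivision (n : ℕ) : Bool :=
  2 ≤ n && ((List.range 97).filter (·.Prime)).all fun d ↦ n < d * d || n % d != 0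

theorem trialDivision_eq_true_iff {n : ℕ} (hn : n < 97 * 97) :
    trialDivision n = true ↔ n.Prime := by
  simp only [trialDivision, Bool.and_eq_true, decide_eq_true_eq, List.all_eq_true,
    List.mem_filter, List.mem_range, Bool.or_eq_true, bne_iff_ne, ne_eq]
  refine ⟨fun ⟨h2, h⟩ ↦ by_contra fun hn' ↦ ?_, fun hp ↦ ⟨hp.two_le, fun d ⟨_, hd⟩ ↦ ?_⟩⟩
  · have hmin := minFac_prime (by omega : n ≠ 1)
    have hsq := minFac_sq_le_self (by omega) hn'
    rcases h n.minFac ⟨by nlinarith, hmin⟩ with h | h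
    · nlinarith
    · exact h (mod_eq_zero_of_dvd (minFac_dvd n))
  · refine or_iff_not_imp_right.2 fun hmod ↦ ?_
    obtain rfl := (prime_dvd_prime_iff_eq hd hp).1 (dvd_of_mod_eq_zero (not_not.1 hmod))
    nlinarith [hp.two_le]

theorem filter_range_trialDivision {N : ℕ} (hN : N ≤ 97 * 97) :
    (List.range N).filter trialDivision = (List.range N).filter (Nat.Prime ·) :=
  List.filter_congr fun n hn ↦ by
    rw [Bool.eq_iff_iff, decide_eq_true_iff,
      trialDivision_eq_true_iff ((List.mem_range.1 hn).trans_le hN)]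

theorem primeCounting_eq_length_filter_trialDivision {n : ℕ} (hn : n < 97 * 97) :
    π n = ((List.range (n + 1)).filter trialDivision).length := by
  rw [filter_range_trialDivision hn, ← List.countP_eq_length_filter]
  rfl

theorem primeCounting_511 : π 511 = 97 := by
  rw [primeCounting_eq_length_filter_trialDivision (by norm_num)]
  decide +kernel

theorem primeCounting_8191 : π 8191 = 1028 := by
  rw [primeCounting_eq_length_filter_trialDivision (by norm_num)]
  decide +kernel

def smallPrimes : List ℕ := (List.range 9050).filter trialDivision

theorem smallPrimes_length : smallPrimes.length = 1125 := by
  decide +kernel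

theorem nth_prime_eq_getD_smallPrimes {r : ℕ} (hr : r < smallPrimes.length) :
    nth Nat.Prime r = smallPrimes.getD r 0 := by
  rw [smallPrimes, filter_range_trialDivision (by norm_num)] at hr ⊢
  exact nth_eq_getD_filter_range hr

-- The pairs in the `i`-th list are `(p_{i+1+j}, p_j)`.
theorem smallPrimes_zip_drop_all_le_mul :
    ∀ i < 97, ((smallPrimes.drop (i + 1)).zip smallPrimes).all
      fun q ↦ q.1 ≤ smallPrimes.getD i 0 * q.2 := by
  decide +kernel

theorem nth_prime_add_one_add_le_mul {i j : ℕ} (hi : i < 97) (hij : i + 1 + j < 1125) :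
    nth Nat.Prime (i + 1 + j) ≤ nth Nat.Prime i * nth Nat.Prime j := by
  have hlen := smallPrimes_length
  have hj : j < ((smallPrimes.drop (i + 1)).zip smallPrimes).length := by
    simp only [List.length_zip, List.length_drop]
    omega
  have := List.all_eq_true.1 (smallPrimes_zip_drop_all_le_mul i hi) _ (List.getElem_mem hj)
  simp only [List.getElem_zip, List.getElem_drop, decide_eq_true_eq] at this
  rw [nth_prime_eq_getD_smallPrimes (by omega), nth_prime_eq_getD_smallPrimes (by omega),
    nth_prime_eq_getD_smallPrimes (by omega), List.getD_eq_getElem _ _ (by omega : i + 1 + j < _),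
    List.getD_eq_getElem _ _ (by omega : j < _)]
  exact this

theorem primeCounting_add_le_primeCounting_mul_of_small {m n : ℕ} (hm : 2 ≤ m) (hm' : m ≤ 511)
    (hn : 2 ≤ n) (hn' : n ≤ 8191) : π m + π n ≤ π (m * n) := by
  obtain ⟨i, hi⟩ : ∃ i, π m = i + 1 :=
    exists_eq_add_one.2 (pos_of_ne_zero (primeCounting_eq_zero_iff.not.2 (by omega)))
  obtain ⟨j, hj⟩ : ∃ j, π n = j + 1 :=
    exists_eq_add_one.2 (pos_of_ne_zero (primeCounting_eq_zero_iff.not.2 (by omega)))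
  have hi97 : i < 97 := by
    have := monotone_primeCounting hm'
    rw [primeCounting_511] at this
    omega
  have hij : i + 1 + j < 1125 := by
    have := monotone_primeCounting hn'
    rw [primeCounting_8191] at this
    omega
  have := nth_prime_le_iff_lt_primeCounting.1 <| (nth_prime_add_one_add_le_mul hi97 hij).trans <|
    Nat.mul_le_mul (nth_prime_le_iff_lt_primeCounting (x := m).2 (by omega))
      (nth_prime_le_iff_lt_primeCounting (x := n).2 (by omega))
  omega

/-- **Ishikawa's inequality**. -/
theorem Nat.primeCounting_add_le_primeCounting_mul {m n : ℕ} (hm : 2 ≤ m) (hn : 2 ≤ n) :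
    π m + π n ≤ π (m * n) := by
  wlog hmn : m ≤ n generalizing m n
  · rw [mul_comm, add_comm]
    exact this hn hm (by omega)
  by_cases hsmall : m ≤ 511 ∧ n ≤ 8191
  · exact primeCounting_add_le_primeCounting_mul_of_small hm hsmall.1 hn hsmall.2
  · exact primeCounting_add_le_primeCounting_mul_of_large hm hmn (by omega)

theorem Nat.primeCounting_add_le_of_mul_le {a b c : ℕ} (hc : 2 ≤ c)
    (ha : nth Nat.Prime (π c - 1) ≤ a) (hbc : b * c ≤ a) : π b + π c ≤ π a := by
  rcases lt_or_ge b 2 with hb | hb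
  · have := nth_prime_le_iff_lt_primeCounting.1 ha
    rw [primeCounting_eq_zero_iff.2 (by omega : b ≤ 1)]
    omega
  · exact (primeCounting_add_le_primeCounting_mul hb hc).trans (monotone_primeCounting hbc)

theorem primePi_div_add_primePi_le {k x : ℝ} (hk : 2 ≤ k)
    (hx : (nthPrime (primePi k) : ℝ) ≤ x) : primePi (x / k) + primePi k ≤ primePi x := by
  have hx0 : 0 ≤ x := (Nat.cast_nonneg _).trans hx
  refine primeCounting_add_le_of_mul_le (Nat.le_floor (by exact_mod_cast hk)) (Nat.le_floor hx)
    (Nat.le_floor ?_)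
  push_cast
  calc (⌊x / k⌋₊ : ℝ) * ⌊k⌋₊ ≤ x / k * k := by
        gcongr
        exacts [Nat.floor_le (by positivity), Nat.floor_le (by linarith)]
    _ = x := div_mul_cancel₀ x (by linarith)

theorem nthPrime_le_of_forall_primePi_div_add_le {k : ℝ} {n m : ℕ} (hn : 1 ≤ n)
    (h : ∀ x : ℝ, (m : ℝ) ≤ x → primePi (x / k) + n ≤ primePi x) : nthPrime n ≤ m := by
  by_contra! hm
  have hbelow : ¬ n - 1 < π (nthPrime n - 1) := by
    rw [← nth_prime_le_iff_lt_primeCounting, nthPrime]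
    have := (prime_nth_prime (n - 1)).pos
    omega
  have := h (nthPrime n - 1 : ℕ) (by exact_mod_cast (by omega : m ≤ nthPrime n - 1))
  unfold primePi at this
  rw [Nat.floor_natCast] at this
  omega

theorem stmt6 (k : ℝ) (hk : 2 ≤ k) :
    Ram k (primePi k) = nthPrime (primePi k) := by
  have hn : 1 ≤ primePi k := by
    have : 2 ≤ ⌊k⌋₊ := Nat.le_floor (by exact_mod_cast hk)
    exact pos_of_ne_zero (primeCounting_eq_zero_iff.not.2 (by omega))
  exact IsLeast.csInf_eq ⟨⟨(prime_nth_prime _).pos, fun x hx ↦ primePi_div_add_primePi_le hk hx⟩,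
    fun m hm ↦ nthPrime_le_of_forall_primePi_div_add_le hn hm.2⟩
end

section
/- If p is an odd prime and k > 1 is real, then R_n^(k) ≠ kp - 1 for every n ≥ 1. -/
lemma pi_succ (n : ℕ) :
    Nat.primeCounting (n + 1) = Nat.primeCounting n + if Nat.Prime (n + 1) then 1 else 0 := by
  simp [Nat.primeCounting, Nat.primeCounting', Nat.count_succ]

theorem stmt11 (p : ℕ) (hp : p.Prime) (hodd : p ≠ 2) (k : ℝ) (hk : 1 < k)
    (n : ℕ) (hn : 1 ≤ n) :
    (Ram k n : ℝ) ≠ k * p - 1 := by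
  intro hEq
  have hp3 : 3 ≤ p := by have := hp.two_le; omega
  have hk0 : (0:ℝ) < k := lt_trans one_pos hk
  set m := Ram k n with hm
  have hmR : (m : ℝ) = k * p - 1 := hEq
  have hpR : (3:ℝ) ≤ (p:ℝ) := by exact_mod_cast hp3
  have hm3 : 3 ≤ m := by
    have h2 : (2:ℝ) < (m:ℝ) := by rw [hmR]; nlinarith
    have : 2 < m := by exact_mod_cast h2
    omega
  set S := {m : ℕ | 0 < m ∧ ∀ x : ℝ, (m : ℝ) ≤ x → primePi (x / k) + n ≤ primePi x} with hS
  have hinf : sInf S = m := rfl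
  have hne : S.Nonempty := by
    by_contra h
    rw [Set.not_nonempty_iff_eq_empty] at h
    rw [h, Nat.sInf_empty] at hinf
    omega
  have hmem : m ∈ S := hinf ▸ Nat.sInf_mem hne
  obtain ⟨-, hprop⟩ := hmem
  have hnotmem : m - 1 ∉ S := Nat.notMem_of_lt_sInf (by rw [hinf]; omega)
  have hfail : ∃ x : ℝ, ((m - 1 : ℕ) : ℝ) ≤ x ∧ primePi x < primePi (x / k) + n := by
    by_contra h
    push_neg at h
    exact hnotmem ⟨by omega, fun x hx => h x hx⟩
  obtain ⟨x, hx1, hx2⟩ := hfail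
  have hxm : x < (m : ℝ) := by
    by_contra h
    push_neg at h
    exact absurd (hprop x h) (by omega)
  have hmRge : (3:ℝ) ≤ (m:ℝ) := by exact_mod_cast hm3
  have hm1cast : ((m - 1 : ℕ) : ℝ) = (m : ℝ) - 1 := by
    have h1m : 1 ≤ m := by omega
    push_cast [h1m]; ring
  have hx0 : (0:ℝ) ≤ x := le_trans (by rw [hm1cast]; linarith) hx1
  have hfx : ⌊x⌋₊ = m - 1 := by
    rw [Nat.floor_eq_iff hx0]
    exact ⟨by exact_mod_cast hx1, by rw [hm1cast]; push_cast; linarith⟩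
  have hxk : x / k < (p : ℝ) := by
    rw [div_lt_iff₀ hk0]; nlinarith
  have hfxk : ⌊x / k⌋₊ ≤ p - 1 := by
    have : ⌊x / k⌋₊ < p := by
      rw [Nat.floor_lt (div_nonneg hx0 (le_of_lt hk0))]; exact hxk
    omega
  have hpc : ((p - 1 : ℕ) : ℝ) = (p : ℝ) - 1 := by
    have h1p : 1 ≤ p := by omega
    push_cast [h1p]; ring
  have hmk : ⌊(m : ℝ) / k⌋₊ = p - 1 := by
    rw [Nat.floor_eq_iff (div_nonneg (by positivity) (le_of_lt hk0))]
    rw [hpc]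
    constructor
    · rw [le_div_iff₀ hk0, hmR]; nlinarith
    · rw [div_lt_iff₀ hk0, hmR]; nlinarith
  have h1 : Nat.primeCounting (p - 1) + n ≤ Nat.primeCounting m := by
    have := hprop (m : ℝ) le_rfl
    simpa [primePi, hmk, Nat.floor_natCast] using this
  have h2 : Nat.primeCounting (m - 1) < Nat.primeCounting (p - 1) + n := by
    have hle : primePi (x / k) ≤ Nat.primeCounting (p - 1) :=
      Nat.monotone_primeCounting hfxk
    have hx' : primePi x = Nat.primeCounting (m - 1) := by rw [primePi, hfx]
    omega
  have hms : m - 1 + 1 = m := by omega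
  have h3 := pi_succ (m - 1)
  rw [hms] at h3
  have hmprime : Nat.Prime m := by
    by_cases hPm : Nat.Prime m
    · exact hPm
    · rw [if_neg hPm] at h3; omega
  rw [if_pos hmprime] at h3
  have h4 : Nat.primeCounting m = Nat.primeCounting (p - 1) + n := by omega
  have h5 : Nat.primeCounting p + n ≤ Nat.primeCounting (m + 1) := by
    have hP := hprop ((m:ℝ) + 1) (by linarith)
    have hdiv : ((m:ℝ) + 1) / k = (p : ℝ) := by
      rw [show (m:ℝ) + 1 = k * p by rw [hmR]; ring]
      field_simp
    have hfl : ⌊(m:ℝ) + 1⌋₊ = m + 1 := by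
      rw [show (m:ℝ) + 1 = ((m + 1 : ℕ) : ℝ) by push_cast; ring, Nat.floor_natCast]
    rw [primePi, primePi, hdiv, Nat.floor_natCast, hfl] at hP
    exact hP
  have hps : p - 1 + 1 = p := by omega
  have h6 := pi_succ (p - 1)
  rw [hps, if_pos hp] at h6
  have h7 := pi_succ m
  have hm1prime : Nat.Prime (m + 1) := by
    by_cases hPm : Nat.Prime (m + 1)
    · exact hPm
    · rw [if_neg hPm] at h7; omega
  have hmodd : Odd m := hmprime.odd_of_ne_two (by omega)
  have heven : Even (m + 1) := by
    rcases hmodd with ⟨t, ht⟩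
    exact ⟨t + 1, by omega⟩
  have := (Nat.Prime.even_iff hm1prime).mp heven
  omega
end
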